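/- Let A be a commutative Q-algebra and consider a regular singular connection ∇ = d + Γ_{-1} t^{-1} dt + (lower order terms) on A((t))^⊕n, where Γ_{-1} ∈ Mat_n(A). Suppose that N·Id + Γ_{-1} is invertible for all but finitely many integers N. Then: (a) for s ≫ 0 the map ∇: t^s A[[t]]^⊕n → t^{s-1} A[[t]]^⊕n dt is an isomorphism; (b) for r ≫ 0 the induced map A((t))^⊕n / t^{-r}A[[t]]^⊕n → A((t))^⊕n dt / t^{-r-1}A[[t]]^⊕n dt is an isomorphism. In particular the connection is Fredholm (its de Rham complex is a perfect complex of A-modules). -/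

import Mathlib

/-!
Write `Λ = A[[t]]^n`. For `v ∈ t^s Λ`, the coefficient of `t^m` in `∇ v` is
`(m + 1 + Γ₋₁) v_{m+1} + ∑_{s ≤ b ≤ m} Γ_{m-b} v_b`, so `∇` maps `t^s Λ` into `t^{s-1} Λ`
and is "lower triangular" for the `t`-adic filtration, with diagonal blocks `N + Γ₋₁` on
`t^N Λ / t^{N+1} Λ`. When these blocks are invertible for all `N` in a range, one solves
`∇ v = w` one coefficient at a time (surjectivity) and reads off vanishing of successive leading
coefficients from `∇ v` (injectivity). Non-resonance leaves only finitely many bad `N`, so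
`N ≥ s` for part (a) and `N < -r` for part (b) are all good once `s` and `r` are large.
-/

open HahnSeries

/-- The formal derivative `d/dt` on Laurent series, as an `A`-linear map. -/
noncomputable def lderiv (A : Type*) [CommRing A] : LaurentSeries A →ₗ[A] LaurentSeries A where
  toFun f :=
    { coeff := fun n => (n + 1 : ℤ) • f.coeff (n + 1)
      isPWO_support' := by
        have hsub : (Function.support fun n : ℤ => (n + 1 : ℤ) • f.coeff (n + 1)) ⊆
            (fun m : ℤ => m - 1) '' f.support := by
          intro n hn
          refine ⟨n + 1, fun h0 => ?_, by ring⟩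
          apply hn
          simp [h0]
        exact ((f.isPWO_support.image_of_monotoneOn
          (fun a _ b _ hab => sub_le_sub_right hab 1)).mono hsub) }
  map_add' f g := by
    ext n
    simp [smul_add]
  map_smul' a f := by
    ext n
    simp only [HahnSeries.coeff_smul, RingHom.id_apply, zsmul_eq_mul, smul_eq_mul]
    push_cast
    ring

/-- The connection `∇ = d + Γ dt` (with `dt` suppressed) on `A((t))^{⊕ n}`,
as an `A`-linear endomorphism. -/
noncomputable def nablaLin {A : Type*} [CommRing A] {n : ℕ}
    (Γ : Matrix (Fin n) (Fin n) (LaurentSeries A)) :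
    (Fin n → LaurentSeries A) →ₗ[A] (Fin n → LaurentSeries A) where
  toFun v := fun i => lderiv A (v i) + ∑ j, Γ i j * v j
  map_add' u v := by
    funext i
    simp only [Pi.add_apply, map_add, mul_add, Finset.sum_add_distrib]
    abel
  map_smul' a v := by
    funext i
    simp only [Pi.smul_apply, map_smul, RingHom.id_apply, smul_add, Finset.smul_sum]
    congr 1
    refine Finset.sum_congr rfl fun j _ => ?_
    rw [← HahnSeries.single_zero_mul_eq_smul, ← HahnSeries.single_zero_mul_eq_smul,
      mul_left_comm]

/-- `t^{s} A[[t]]^{⊕ n}` inside `A((t))^{⊕ n}`, as an `A`-submodule. -/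
def latticeSub (A : Type*) [CommRing A] (n : ℕ) (s : ℤ) :
    Submodule A (Fin n → LaurentSeries A) where
  carrier := {v | ∀ i, ∀ m : ℤ, m < s → (v i).coeff m = 0}
  add_mem' := by
    intro u v hu hv i m hm
    simp [hu i m hm, hv i m hm]
  zero_mem' := by intro i m hm; simp
  smul_mem' := by
    intro a v hv i m hm
    simp [hv i m hm]

open Finset Matrix

theorem LaurentSeries.coeff_mul_eq_sum_Icc {R : Type*} [Semiring R] {f g : LaurentSeries R}
    {a b : ℤ} (hf : ∀ k < a, f.coeff k = 0) (hg : ∀ k < b, g.coeff k = 0) (m : ℤ) :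
    (f * g).coeff m = ∑ k ∈ Icc b (m - a), f.coeff (m - k) * g.coeff k := by
  rw [HahnSeries.coeff_mul]
  refine sum_bij_ne_zero (fun p _ _ => p.2) ?_ ?_ ?_ ?_
  · intro p hp _
    rw [Finset.mem_antidiagonal] at hp
    have : ¬ p.1 < a := fun h => hp.1 (hf _ h)
    have : ¬ p.2 < b := fun h => hp.2.1 (hg _ h)
    rw [mem_Icc]
    omega
  · intro p hp _ q hq _ h
    rw [Finset.mem_antidiagonal] at hp hq
    ext <;> omega
  · intro k _ hne
    refine ⟨(m - k, k), ?_, hne, rfl⟩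
    rw [Finset.mem_antidiagonal]
    exact ⟨left_ne_zero_of_mul hne, right_ne_zero_of_mul hne, sub_add_cancel m k⟩
  · intro p hp _
    rw [Finset.mem_antidiagonal] at hp
    rw [← hp.2.2, add_sub_cancel_right]

section Lattice

variable {A : Type*} [CommRing A] {n : ℕ}

def coeffVec (v : Fin n → LaurentSeries A) (m : ℤ) : Fin n → A := fun j => (v j).coeff m

theorem ext_coeffVec {v w : Fin n → LaurentSeries A} (h : ∀ m, coeffVec v m = coeffVec w m) :
    v = w :=
  funext fun j => HahnSeries.ext <| funext fun m => congrFun (h m) j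

theorem coeffVec_sub (v w : Fin n → LaurentSeries A) (m : ℤ) :
    coeffVec (v - w) m = coeffVec v m - coeffVec w m :=
  funext fun _ => HahnSeries.coeff_sub

theorem mem_latticeSub_iff {v : Fin n → LaurentSeries A} {s : ℤ} :
    v ∈ latticeSub A n s ↔ ∀ m < s, coeffVec v m = 0 :=
  ⟨fun hv m hm => funext fun j => hv j m hm, fun h j m hm => congrFun (h m hm) j⟩

theorem latticeSub_antitone : Antitone (latticeSub A n) :=
  fun _ _ hst _ hv j m hm => hv j m (hm.trans_le hst)

theorem exists_mem_latticeSub (v : Fin n → LaurentSeries A) : ∃ s, v ∈ latticeSub A n s := by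
  obtain ⟨s, hs⟩ := (Set.finite_range fun j => (v j).order).bddBelow
  exact ⟨s, fun j m hm => HahnSeries.coeff_eq_zero_of_lt_order (hm.trans_le (hs ⟨j, rfl⟩))⟩

theorem eq_zero_of_forall_mem_latticeSub {v : Fin n → LaurentSeries A}
    (h : ∀ s, v ∈ latticeSub A n s) : v = 0 :=
  ext_coeffVec fun m => mem_latticeSub_iff.mp (h (m + 1)) m (lt_add_one m)

end Lattice

section Connection

variable {A : Type*} [CommRing A] {n : ℕ} {Γ : Matrix (Fin n) (Fin n) (LaurentSeries A)}

def HasSimplePole (Γ : Matrix (Fin n) (Fin n) (LaurentSeries A)) : Prop :=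
  ∀ i j, ∀ m : ℤ, m < -1 → (Γ i j).coeff m = 0

def coeffMatrix (Γ : Matrix (Fin n) (Fin n) (LaurentSeries A)) (k : ℤ) :
    Matrix (Fin n) (Fin n) A :=
  Matrix.of fun i j => (Γ i j).coeff k

/-- `N • 1 + Γ₋₁`, the map induced by `∇` on `t^N Λ / t^{N+1} Λ ≅ A^n`. -/
noncomputable def indicialMatrix (Γ : Matrix (Fin n) (Fin n) (LaurentSeries A)) (N : ℤ) :
    Matrix (Fin n) (Fin n) A :=
  (N : A) • 1 + coeffMatrix Γ (-1)

theorem coeffVec_nablaLin (hΓ : HasSimplePole Γ) {v : Fin n → LaurentSeries A} {s : ℤ}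
    (hv : v ∈ latticeSub A n s) (m : ℤ) :
    coeffVec (nablaLin Γ v) m = indicialMatrix Γ (m + 1) *ᵥ coeffVec v (m + 1) +
      ∑ b ∈ Icc s m, coeffMatrix Γ (m - b) *ᵥ coeffVec v b := by
  have hmul : ∀ i j, (Γ i j * v j).coeff m = (Γ i j).coeff (-1) * (v j).coeff (m + 1) +
      ∑ b ∈ Icc s m, (Γ i j).coeff (m - b) * (v j).coeff b := by
    intro i j
    rw [LaurentSeries.coeff_mul_eq_sum_Icc (hΓ i j) (hv j) m, sub_neg_eq_add]
    by_cases hs : s ≤ m + 1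
    · rw [← insert_Icc_right_eq_Icc_add_one hs, sum_insert (by simp), sub_add_cancel_left]
    · rw [hv j (m + 1) (by omega), mul_zero, zero_add, Icc_eq_empty (by omega),
        Icc_eq_empty (by omega)]
  funext i
  simp only [coeffVec, nablaLin, LinearMap.coe_mk, AddHom.coe_mk, HahnSeries.coeff_add,
    HahnSeries.coeff_sum, hmul, sum_add_distrib, indicialMatrix, add_mulVec, smul_mulVec,
    one_mulVec, Pi.add_apply, Pi.smul_apply, Finset.sum_apply]
  rw [sum_comm (s := univ), ← add_assoc]
  congr 2
  exact (Int.cast_smul_eq_zsmul A _ _).symm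

theorem nablaLin_mem_latticeSub (hΓ : HasSimplePole Γ) {v : Fin n → LaurentSeries A} {s : ℤ}
    (hv : v ∈ latticeSub A n s) : nablaLin Γ v ∈ latticeSub A n (s - 1) := by
  refine mem_latticeSub_iff.mpr fun m hm => ?_
  rw [coeffVec_nablaLin hΓ hv, mem_latticeSub_iff.mp hv (m + 1) (by omega), mulVec_zero,
    Icc_eq_empty (by omega), sum_empty, add_zero]

theorem latticeSub_le_comap_nablaLin (hΓ : HasSimplePole Γ) (s : ℤ) :
    latticeSub A n s ≤ (latticeSub A n (s - 1)).comap (nablaLin Γ) :=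
  fun _ hv => nablaLin_mem_latticeSub hΓ hv

theorem coeffVec_nablaLin_sub_one (hΓ : HasSimplePole Γ) {v : Fin n → LaurentSeries A} {s : ℤ}
    (hv : v ∈ latticeSub A n s) :
    coeffVec (nablaLin Γ v) (s - 1) = indicialMatrix Γ s *ᵥ coeffVec v s := by
  rw [coeffVec_nablaLin hΓ hv, sub_add_cancel, Icc_eq_empty (by omega), sum_empty, add_zero]

theorem mem_latticeSub_of_nablaLin_mem (hΓ : HasSimplePole Γ) {v : Fin n → LaurentSeries A}
    {s t : ℤ} (hv : v ∈ latticeSub A n s) (hst : s ≤ t)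
    (hU : ∀ N, s ≤ N → N < t → IsUnit (indicialMatrix Γ N))
    (hnabla : nablaLin Γ v ∈ latticeSub A n (t - 1)) : v ∈ latticeSub A n t := by
  induction t, hst using Int.leInduction with
  | base => exact hv
  | succ t hst ih =>
    have hvt : v ∈ latticeSub A n t := ih (fun N h1 h2 => hU N h1 (by omega))
      (latticeSub_antitone (by omega) hnabla)
    have hlead : indicialMatrix Γ t *ᵥ coeffVec v t = 0 := by
      rw [← coeffVec_nablaLin_sub_one hΓ hvt]
      exact mem_latticeSub_iff.mp hnabla (t - 1) (by omega)
    have hdet := ((isUnit_iff_isUnit_det _).mp (hU t hst (lt_add_one t))).mem_nonZeroDivisors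
    have hvt' : coeffVec v t = 0 :=
      mulVec_injective_of_det_mem_nonZeroDivisors hdet (hlead.trans (mulVec_zero _).symm)
    refine mem_latticeSub_iff.mpr fun m hm => ?_
    rcases (Int.lt_add_one_iff.mp hm).lt_or_eq with hm | rfl
    · exact mem_latticeSub_iff.mp hvt m hm
    · exact hvt'

/-- Solves `coeffVec_nablaLin` for the top coefficient, degree by degree from `s` on. Where
`indicialMatrix Γ m` is not invertible, `⁻¹` is `0` and the coefficient is junk. -/
noncomputable def preimageCoeff (Γ : Matrix (Fin n) (Fin n) (LaurentSeries A))
    (w : Fin n → LaurentSeries A) (s m : ℤ) : Fin n → A :=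
  if _ : s ≤ m then
    (indicialMatrix Γ m)⁻¹ *ᵥ (coeffVec w (m - 1) -
      ∑ b ∈ (Icc s (m - 1)).attach, coeffMatrix Γ (m - 1 - b) *ᵥ preimageCoeff Γ w s b)
  else 0
termination_by (m - s).toNat
decreasing_by
  have := mem_Icc.mp b.2
  omega

variable (Γ) in
theorem preimageCoeff_of_lt (w : Fin n → LaurentSeries A) {s m : ℤ} (hm : m < s) :
    preimageCoeff Γ w s m = 0 := by
  rw [preimageCoeff, dif_neg (not_le.mpr hm)]

variable (Γ) in
theorem preimageCoeff_of_le (w : Fin n → LaurentSeries A) {s m : ℤ} (hm : s ≤ m) :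
    preimageCoeff Γ w s m = (indicialMatrix Γ m)⁻¹ *ᵥ (coeffVec w (m - 1) -
      ∑ b ∈ Icc s (m - 1), coeffMatrix Γ (m - 1 - b) *ᵥ preimageCoeff Γ w s b) := by
  rw [preimageCoeff, dif_pos hm, sum_attach (Icc s (m - 1))
    fun b => coeffMatrix Γ (m - 1 - b) *ᵥ preimageCoeff Γ w s b]

noncomputable def preimage (Γ : Matrix (Fin n) (Fin n) (LaurentSeries A))
    (w : Fin n → LaurentSeries A) (s : ℤ) : Fin n → LaurentSeries A :=
  fun j => HahnSeries.ofSuppBddBelow (fun m => preimageCoeff Γ w s m j)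
    ⟨s, fun _ hm => not_lt.mp fun hlt => hm (congrFun (preimageCoeff_of_lt Γ w hlt) _)⟩

theorem coeffVec_preimage (w : Fin n → LaurentSeries A) (s m : ℤ) :
    coeffVec (preimage Γ w s) m = preimageCoeff Γ w s m :=
  rfl

theorem preimage_mem_latticeSub (w : Fin n → LaurentSeries A) (s : ℤ) :
    preimage Γ w s ∈ latticeSub A n s :=
  mem_latticeSub_iff.mpr fun _ hm => preimageCoeff_of_lt Γ w hm

theorem coeffVec_nablaLin_preimage (hΓ : HasSimplePole Γ) {w : Fin n → LaurentSeries A}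
    {s : ℤ} (hw : w ∈ latticeSub A n (s - 1)) {m : ℤ}
    (hU : s ≤ m + 1 → IsUnit (indicialMatrix Γ (m + 1))) :
    coeffVec (nablaLin Γ (preimage Γ w s)) m = coeffVec w m := by
  have hv := preimage_mem_latticeSub (Γ := Γ) w s
  by_cases hm : s ≤ m + 1
  · have hdet := (isUnit_iff_isUnit_det _).mp (hU hm)
    rw [coeffVec_nablaLin hΓ hv, coeffVec_preimage, preimageCoeff_of_le Γ w hm, mulVec_mulVec,
      mul_nonsing_inv _ hdet, one_mulVec, add_sub_cancel_right]
    simp only [coeffVec_preimage, sub_add_cancel]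
  · rw [mem_latticeSub_iff.mp (nablaLin_mem_latticeSub hΓ hv) m (by omega),
      mem_latticeSub_iff.mp hw m (by omega)]

theorem bijOn_nablaLin_latticeSub (hΓ : HasSimplePole Γ) {s : ℤ}
    (hU : ∀ N ≥ s, IsUnit (indicialMatrix Γ N)) :
    Set.BijOn (nablaLin Γ) (latticeSub A n s) (latticeSub A n (s - 1)) := by
  refine ⟨fun _ hv => nablaLin_mem_latticeSub hΓ hv, fun v hv v' hv' heq => ?_,
    fun w hw => ⟨preimage Γ w s, preimage_mem_latticeSub w s, ?_⟩⟩
  · have hker : nablaLin Γ (v - v') = 0 := by rw [map_sub, heq, sub_self]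
    have hmem : ∀ t, v - v' ∈ latticeSub A n t := fun t =>
      latticeSub_antitone (le_max_right s t) <|
        mem_latticeSub_of_nablaLin_mem hΓ (sub_mem hv hv') (le_max_left s t)
          (fun N hN _ => hU N hN) (hker ▸ zero_mem _)
    exact sub_eq_zero.mp (eq_zero_of_forall_mem_latticeSub hmem)
  · exact ext_coeffVec fun m => coeffVec_nablaLin_preimage hΓ hw fun hm => hU _ hm

theorem bijective_mapQ_nablaLin_latticeSub (hΓ : HasSimplePole Γ) {t : ℤ}
    (hU : ∀ N < t, IsUnit (indicialMatrix Γ N)) :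
    Function.Bijective (Submodule.mapQ (latticeSub A n t) (latticeSub A n (t - 1)) (nablaLin Γ)
      (latticeSub_le_comap_nablaLin hΓ t)) := by
  refine ⟨fun x y hxy => ?_, fun y => ?_⟩
  · obtain ⟨v, rfl⟩ := Submodule.Quotient.mk_surjective _ x
    obtain ⟨v', rfl⟩ := Submodule.Quotient.mk_surjective _ y
    rw [Submodule.mapQ_apply, Submodule.mapQ_apply, Submodule.Quotient.eq, ← map_sub] at hxy
    rw [Submodule.Quotient.eq]
    obtain ⟨s, hs⟩ := exists_mem_latticeSub (v - v')
    exact mem_latticeSub_of_nablaLin_mem hΓ (latticeSub_antitone (min_le_left s t) hs)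
      (min_le_right s t) (fun N _ hN => hU N hN) hxy
  · obtain ⟨w, rfl⟩ := Submodule.Quotient.mk_surjective _ y
    obtain ⟨s, hs⟩ := exists_mem_latticeSub w
    refine ⟨Submodule.Quotient.mk (preimage Γ w (s + 1)), ?_⟩
    rw [Submodule.mapQ_apply, Submodule.Quotient.eq, mem_latticeSub_iff]
    intro m _
    rw [coeffVec_sub, coeffVec_nablaLin_preimage hΓ (by rwa [add_sub_cancel_right])
      fun _ => hU _ (by omega), sub_self]

end Connection

theorem stmt_4_general {A : Type*} [CommRing A] {n : ℕ}
    (Γ : Matrix (Fin n) (Fin n) (LaurentSeries A))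
    (hpole : ∀ i j, ∀ m : ℤ, m < -1 → (Γ i j).coeff m = 0)
    (hinv : {N : ℤ | ¬ IsUnit ((N : A) • (1 : Matrix (Fin n) (Fin n) A) +
      Matrix.of fun i j => (Γ i j).coeff (-1))}.Finite) :
    (∃ s₀ : ℤ, ∀ s ≥ s₀,
        Set.BijOn (nablaLin Γ) (latticeSub A n s) (latticeSub A n (s - 1))) ∧
    (∃ r₀ : ℤ, ∀ r ≥ r₀,
        ∃ h : latticeSub A n (-r) ≤ (latticeSub A n (-r - 1)).comap (nablaLin Γ),
          Function.Bijective
            (Submodule.mapQ (latticeSub A n (-r)) (latticeSub A n (-r - 1)) (nablaLin Γ) h)) := by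
  have hU : ∀ᶠ N in Filter.atBot ⊔ Filter.atTop, IsUnit (indicialMatrix Γ N) := by
    rw [← Int.cofinite_eq]
    exact hinv.eventually_cofinite_notMem.mono fun _ h => not_not.mp h
  obtain ⟨s₀, hs₀⟩ := Filter.eventually_atTop.mp (Filter.eventually_sup.mp hU).2
  obtain ⟨r₀, hr₀⟩ := Filter.eventually_atBot.mp (Filter.eventually_sup.mp hU).1
  exact ⟨⟨s₀, fun s hs => bijOn_nablaLin_latticeSub hpole fun N hN =>
      hs₀ N (hs.trans hN)⟩,
    ⟨-r₀, fun r hr => ⟨latticeSub_le_comap_nablaLin hpole (-r),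
      bijective_mapQ_nablaLin_latticeSub hpole fun N hN => hr₀ N (by omega)⟩⟩⟩

/-- **Example \ref{e:rs-evalues}** (regular singular connections with non-resonant eigenvalues
are Fredholm).  Let `A` be a commutative `ℚ`-algebra and
`∇ = d + Γ₋₁ t^{-1} dt + (lower order terms)` a regular singular connection on `A((t))^{⊕ n}`
such that `N·Id + Γ₋₁` is invertible for all but finitely many integers `N`.  Then:
(a) for `s ≫ 0` the map `∇ : t^s A[[t]]^{⊕n} → t^{s-1} A[[t]]^{⊕n} dt` is an isomorphism, and
(b) for `r ≫ 0` the induced map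
`A((t))^{⊕n}/t^{-r} A[[t]]^{⊕n} → A((t))^{⊕n} dt / t^{-r-1} A[[t]]^{⊕n} dt` is an isomorphism
(so the connection is Fredholm). -/
theorem stmt_4 {A : Type*} [CommRing A] [Algebra ℚ A] {n : ℕ}
    (Γ : Matrix (Fin n) (Fin n) (LaurentSeries A))
    (hpole : ∀ i j, ∀ m : ℤ, m < -1 → (Γ i j).coeff m = 0)
    (hinv : {N : ℤ | ¬ IsUnit ((N : A) • (1 : Matrix (Fin n) (Fin n) A) +
      Matrix.of fun i j => (Γ i j).coeff (-1))}.Finite) :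
    (∃ s₀ : ℤ, ∀ s ≥ s₀,
        Set.BijOn (nablaLin Γ) (latticeSub A n s) (latticeSub A n (s - 1))) ∧
    (∃ r₀ : ℤ, ∀ r ≥ r₀,
        ∃ h : latticeSub A n (-r) ≤ (latticeSub A n (-r - 1)).comap (nablaLin Γ),
          Function.Bijective
            (Submodule.mapQ (latticeSub A n (-r)) (latticeSub A n (-r - 1)) (nablaLin Γ) h)) :=
  stmt_4_general Γ hpole hinv
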